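/- arXiv:1806.06996 — 5 statements merged into one kernel-verified Lean document; each statement's English description precedes it below -/
import Mathlib

section
/- Let f : ℝⁿ → ℝ be a homogeneous polynomial (form) of even degree d. Then f^{1/d} is a norm if and only if f is strictly convex. -/
/-!
If `f = g ^ d` for a norm `g`, then `f` is convex and positive definite. Strictness comes from
polynomiality: were `f` affine on a segment `x + t • v`, `0 < t ≤ b`, homogeneity would make
`s ↦ f (v + s • x) = s ^ d f (x + s⁻¹ • v)` the polynomial `α s ^ d + β s ^ (d - 1)` for large `s`,
hence for all `s`, and `s = 0` gives `f v = 0`.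

Conversely a strictly convex even form vanishing at `0` is positive definite, and `g = f ^ (1 / d)`
is absolutely homogeneous with convex unit ball `{f ≤ 1}`, hence subadditive.
-/

open MvPolynomial Set

namespace MvPolynomial

theorem IsHomogeneous.eval_smul {R σ : Type*} [CommSemiring R] {φ : MvPolynomial σ R} {d : ℕ}
    (hφ : φ.IsHomogeneous d) (c : R) (x : σ → R) : eval (c • x) φ = c ^ d * eval x φ := by
  rw [eval_eq, eval_eq, Finset.mul_sum]
  refine Finset.sum_congr rfl fun m hm => ?_
  have hdeg : ∑ i ∈ m.support, m i = d := by
    rw [← Finsupp.degree_apply, Finsupp.degree_eq_weight_one]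
    exact hφ (mem_support_iff.mp hm)
  simp only [Pi.smul_apply, smul_eq_mul, mul_pow, Finset.prod_mul_distrib,
    Finset.prod_pow_eq_pow_sum, hdeg]
  ring

theorem exists_polynomial_eval_add_smul {R σ : Type*} [CommRing R] (p : MvPolynomial σ R)
    (u w : σ → R) : ∃ P : Polynomial R, ∀ t, P.eval t = eval (u + t • w) p := by
  refine ⟨aeval (fun i => Polynomial.C (u i) + Polynomial.C (w i) * Polynomial.X) p, fun t => ?_⟩
  induction p using MvPolynomial.induction_on with
  | C a => simp
  | add q r hq hr => simp [hq, hr]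
  | mul_X q i hq => simp [hq]; ring

end MvPolynomial

theorem ConvexOn.eq_chord_of_eq_chord {h : ℝ → ℝ} (hh : ConvexOn ℝ (Icc 0 1) h) {b t : ℝ}
    (hb : b < 1) (heq : h b = (1 - b) * h 0 + b * h 1) (ht : 0 ≤ t) (htb : t ≤ b) :
    h t = (1 - t) * h 0 + t * h 1 := by
  have mem0 : (0 : ℝ) ∈ Icc 0 1 := ⟨le_rfl, zero_le_one⟩
  have mem1 : (1 : ℝ) ∈ Icc 0 1 := ⟨zero_le_one, le_rfl⟩
  have hle : h t ≤ (1 - t) * h 0 + t * h 1 := by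
    simpa using hh.2 mem0 mem1 (by linarith : 0 ≤ 1 - t) ht (by ring)
  -- `b` is the convex combination `θ t + (1 - θ) 1`
  set θ := (1 - b) / (1 - t)
  have hθ : θ * (1 - t) = 1 - b := div_mul_cancel₀ _ (by linarith)
  have hθ0 : 0 < θ := div_pos (by linarith) (by linarith)
  have hθ1 : θ ≤ 1 := (div_le_one (by linarith)).2 (by linarith)
  have hb' : θ * t + (1 - θ) = b := by linear_combination -hθ
  have hge : h b ≤ θ * h t + (1 - θ) * h 1 := by
    simpa [hb'] using hh.2 ⟨ht, by linarith⟩ mem1 hθ0.le (by linarith) (add_sub_cancel θ 1)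
  have hcomb : θ * ((1 - t) * h 0 + t * h 1) + (1 - θ) * h 1 = h b := by
    linear_combination h 0 * hθ + h 1 * hb' - heq
  have hscaled : θ * ((1 - t) * h 0 + t * h 1) ≤ θ * h t := by linarith
  linarith [le_of_mul_le_mul_left hscaled hθ0]

section RealVectorSpace

variable {E : Type*} [AddCommGroup E] [Module ℝ E]

theorem StrictConvexOn.apply_zero_lt {f : E → ℝ} (hf : StrictConvexOn ℝ univ f) (heven : f.Even)
    {x : E} (hx : x ≠ 0) : f 0 < f x := by
  have hne : x ≠ -x := fun h => hx <| by
    have : (2 : ℝ) • x = 0 := by rw [two_smul]; nth_rw 2 [h]; exact add_neg_cancel x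
    simpa using this
  have hmid : (1 / 2 : ℝ) • x + (1 / 2 : ℝ) • -x = 0 := by module
  have hlt := hf.2 (mem_univ x) (mem_univ (-x)) hne (by norm_num : (0 : ℝ) < 1 / 2)
    (by norm_num : (0 : ℝ) < 1 / 2) (by norm_num)
  simp only [hmid, heven x, smul_eq_mul] at hlt
  linarith

/-- `x + y` is `A + B` times a convex combination of the unit vectors `A⁻¹ • x` and `B⁻¹ • y`. -/
theorem map_add_le_of_convexOn_pow {g : E → ℝ} {d : ℕ} (hd : d ≠ 0)
    (hsmul : ∀ c : ℝ, 0 ≤ c → ∀ x, g (c • x) = c * g x) (hpos : ∀ x ≠ 0, 0 < g x)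
    (hconv : ConvexOn ℝ univ fun x => g x ^ d) (x y : E) : g (x + y) ≤ g x + g y := by
  have hg0 : g 0 = 0 := by simpa using hsmul 0 le_rfl 0
  rcases eq_or_ne x 0 with rfl | hx
  · simp [hg0]
  rcases eq_or_ne y 0 with rfl | hy
  · simp [hg0]
  have hunit : ∀ z ≠ 0, g ((g z)⁻¹ • z) ^ d = 1 := fun z hz => by
    rw [hsmul _ (inv_nonneg.2 (hpos z hz).le), inv_mul_cancel₀ (hpos z hz).ne', one_pow]
  set A := g x
  set B := g y
  have hA : 0 < A := hpos x hx
  have hB : 0 < B := hpos y hy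
  have hAB : 0 < A + B := add_pos hA hB
  have hxA : g (A⁻¹ • x) ^ d = 1 := hunit x hx
  have hyB : g (B⁻¹ • y) ^ d = 1 := hunit y hy
  have hcomb : (A + B)⁻¹ • (x + y) = (A / (A + B)) • (A⁻¹ • x) + (B / (A + B)) • (B⁻¹ • y) := by
    match_scalars <;> field_simp
  have hle : g ((A + B)⁻¹ • (x + y)) ^ d ≤ 1 := by
    have hjensen := hconv.2 (mem_univ (A⁻¹ • x)) (mem_univ (B⁻¹ • y)) (div_nonneg hA.le hAB.le)
      (div_nonneg hB.le hAB.le) (by field_simp)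
    rw [hcomb]
    simpa [hxA, hyB, ← add_div, div_self hAB.ne'] using hjensen
  have hle' : g ((A + B)⁻¹ • (x + y)) ≤ 1 := le_of_not_gt fun h => (one_lt_pow₀ h hd).not_ge hle
  rwa [hsmul _ (inv_nonneg.2 hAB.le), inv_mul_le_iff₀ hAB, mul_one] at hle'

end RealVectorSpace

namespace MvPolynomial.IsHomogeneous

variable {σ : Type*} {p : MvPolynomial σ ℝ} {d : ℕ}

theorem eval_zero_of_ne_zero (hp : p.IsHomogeneous d) (hd : d ≠ 0) : eval 0 p = 0 := by
  simpa [zero_pow hd] using hp.eval_smul 0 0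

theorem eval_neg (hp : p.IsHomogeneous d) (hd : Even d) (x : σ → ℝ) :
    eval (-x) p = eval x p := by
  rw [← neg_one_smul ℝ x, hp.eval_smul, hd.neg_one_pow, one_mul]

theorem rpow_inv_eval_smul (hp : p.IsHomogeneous d) (hd : Even d) (hd0 : d ≠ 0)
    (hnn : ∀ x, 0 ≤ eval x p) (c : ℝ) (x : σ → ℝ) :
    eval (c • x) p ^ (d⁻¹ : ℝ) = |c| * eval x p ^ (d⁻¹ : ℝ) := by
  rw [hp.eval_smul, ← hd.pow_abs, Real.mul_rpow (by positivity) (hnn x),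
    Real.pow_rpow_inv_natCast (abs_nonneg c) hd0]

theorem eval_eq_zero_of_eval_add_smul_eq (hp : p.IsHomogeneous d) (hd : 2 ≤ d) {x v : σ → ℝ}
    {α β b : ℝ} (hb : 0 < b) (h : ∀ t ∈ Ioc 0 b, eval (x + t • v) p = α + β * t) :
    eval v p = 0 := by
  obtain ⟨R, hR⟩ := exists_polynomial_eval_add_smul p v x
  have hRform :
      R = Polynomial.C α * Polynomial.X ^ d + Polynomial.C β * Polynomial.X ^ (d - 1) := by
    refine Polynomial.eq_of_infinite_eval_eq _ _ ((Ici_infinite b⁻¹).mono fun s hs => ?_)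
    have hs0 : 0 < s := (inv_pos.2 hb).trans_le hs
    have hsb : s⁻¹ ∈ Ioc 0 b := ⟨inv_pos.2 hs0, inv_le_of_inv_le₀ hb hs⟩
    have hline : v + s • x = s • (x + s⁻¹ • v) := by
      rw [smul_add, smul_smul, mul_inv_cancel₀ hs0.ne', one_smul, add_comm]
    have hpow : s ^ d = s ^ (d - 1) * s := by rw [← pow_succ, Nat.sub_add_cancel (by omega)]
    change R.eval s = _
    rw [hR, hline, hp.eval_smul, h _ hsb]
    simp only [Polynomial.eval_add, Polynomial.eval_mul, Polynomial.eval_C, Polynomial.eval_pow,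
      Polynomial.eval_X, hpow]
    field_simp
  simpa [hRform, zero_pow (by omega : d ≠ 0), zero_pow (by omega : d - 1 ≠ 0)] using (hR 0).symm

theorem strictConvexOn_eval_of_convexOn (hp : p.IsHomogeneous d) (hd : 2 ≤ d)
    (hconv : ConvexOn ℝ univ fun x => eval x p) (hpos : ∀ x ≠ 0, 0 < eval x p) :
    StrictConvexOn ℝ univ fun x => eval x p := by
  refine ⟨convex_univ, fun x _ y _ hxy a b ha hb hab => ?_⟩
  by_contra! hge
  obtain rfl : a = 1 - b := by linarith
  let h : ℝ → ℝ := fun t => eval (x + t • (y - x)) p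
  have hh : ConvexOn ℝ (Icc 0 1) h := by
    refine (hconv.comp_affineMap (AffineMap.lineMap x y)).subset (subset_univ _) (convex_Icc 0 1)
      |>.congr fun t _ => ?_
    simp only [Function.comp_apply, AffineMap.lineMap_apply_module, h]
    exact congrArg (eval · p) (by module)
  have heq : h b = (1 - b) * h 0 + b * h 1 := by
    have hpt : x + b • (y - x) = (1 - b) • x + b • y := by module
    simp only [h, hpt, zero_smul, add_zero, one_smul, add_sub_cancel]
    exact le_antisymm (hconv.2 (mem_univ x) (mem_univ y) ha.le hb.le hab) hge
  have haff : ∀ t ∈ Ioc 0 b, eval (x + t • (y - x)) p = h 0 + (h 1 - h 0) * t := fun t ht => by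
    linear_combination hh.eq_chord_of_eq_chord (by linarith) heq ht.1.le ht.2
  exact (hpos _ (sub_ne_zero.2 hxy.symm)).ne' (hp.eval_eq_zero_of_eval_add_smul_eq hd hb haff)

end MvPolynomial.IsHomogeneous

/-- For a form `f` of even degree `d`, the `d`-th root of `f` is a norm if and only if
`f` is strictly convex. -/
theorem stmt_3 {n d : ℕ} (hd : Even d) (hd0 : 0 < d)
    (p : MvPolynomial (Fin n) ℝ) (hp : p.IsHomogeneous d) :
    (∃ g : (Fin n → ℝ) → ℝ,
      (∀ x, g x ^ d = MvPolynomial.eval x p) ∧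
      (∀ x, x ≠ 0 → 0 < g x) ∧
      g 0 = 0 ∧
      (∀ (c : ℝ) (x : Fin n → ℝ), g (c • x) = |c| * g x) ∧
      (∀ x y : Fin n → ℝ, g (x + y) ≤ g x + g y)) ↔
    StrictConvexOn ℝ Set.univ (fun x : Fin n → ℝ => MvPolynomial.eval x p) := by
  constructor
  · rintro ⟨g, hgd, hgpos, -, hgsmul, hgadd⟩
    let q : Seminorm ℝ (Fin n → ℝ) := .of g hgadd fun c x => by rw [Real.norm_eq_abs, hgsmul]
    have hconv : ConvexOn ℝ univ fun x => eval x p := by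
      have hpq : (fun x => eval x p) = ⇑q ^ d := by ext x; exact (hgd x).symm
      exact hpq ▸ q.convexOn.pow (fun x _ => apply_nonneg q x) d
    refine hp.strictConvexOn_eval_of_convexOn (by obtain ⟨k, rfl⟩ := hd; omega) hconv
      fun x hx => ?_
    exact hgd x ▸ pow_pos (hgpos x hx) d
  · intro hsc
    have hf0 := hp.eval_zero_of_ne_zero hd0.ne'
    have hpos : ∀ x ≠ 0, 0 < eval x p := fun x hx =>
      hf0 ▸ hsc.apply_zero_lt (hp.eval_neg hd) hx
    have hnn : ∀ x, 0 ≤ eval x p := fun x => by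
      rcases eq_or_ne x 0 with rfl | hx
      exacts [hf0.ge, (hpos x hx).le]
    have hsmul := hp.rpow_inv_eval_smul hd hd0.ne' hnn
    refine ⟨fun x => eval x p ^ (d⁻¹ : ℝ), fun x => Real.rpow_inv_natCast_pow (hnn x) hd0.ne',
      fun x hx => Real.rpow_pos_of_pos (hpos x hx) _, ?_, hsmul,
      map_add_le_of_convexOn_pow hd0.ne' (fun c hc x => by rw [hsmul, abs_of_nonneg hc])
        (fun x hx => Real.rpow_pos_of_pos (hpos x hx) _) ?_⟩
    · simp only [hf0, Real.zero_rpow (inv_ne_zero (Nat.cast_ne_zero.2 hd0.ne'))]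
    · simpa only [Real.rpow_inv_natCast_pow (hnn _) hd0.ne'] using hsc.convexOn
end

section
/- Let ‖·‖ be any norm on ℝⁿ. For any ε > 0, there exist an even integer d and a convex positive definite form f of degree d such that ‖x‖ ≤ f(x)^{1/d} ≤ (1+ε)‖x‖ for all x ∈ ℝⁿ. -/
/-!
By Hahn–Banach, every `x` has a linear form `φ` with `|φ| ≤ ‖·‖` and `φ x = ‖x‖`. By compactness
of the unit sphere, finitely many of them, `φ₁, …, φₘ`, satisfy `‖y‖ ≤ (1 + δ) maxₖ φₖ y`. For even
`d` the form `f = ∑ₖ ((1 + δ) φₖ)^d` is convex, and `‖y‖^d ≤ f y ≤ m (1 + δ)^d ‖y‖^d`; since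
`m^(1/d) → 1`, taking `d` large gives `f y ≤ ((1 + ε) ‖y‖)^d`.
-/

open MvPolynomial

lemma ConvexOn.finset_sum {𝕜 E β ι : Type*} [Semiring 𝕜] [PartialOrder 𝕜] [AddCommMonoid E]
    [SMul 𝕜 E] [AddCommMonoid β] [PartialOrder β] [IsOrderedAddMonoid β] [Module 𝕜 β]
    {s : Set E} (t : Finset ι) {f : ι → E → β}
    (hf : ∀ i ∈ t, ConvexOn 𝕜 s (f i)) (hs : Convex 𝕜 s) :
    ConvexOn 𝕜 s (fun x => ∑ i ∈ t, f i x) := by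
  classical
  induction t using Finset.induction_on with
  | empty => simpa using convexOn_const (0 : β) hs
  | insert a t ha ih =>
    simp only [Finset.sum_insert ha]
    exact (hf a (t.mem_insert_self a)).add (ih fun i hi => hf i (Finset.mem_insert_of_mem hi))

lemma exists_even_pos_le_pow {C r : ℝ} (hr : 1 < r) : ∃ d : ℕ, Even d ∧ 0 < d ∧ C ≤ r ^ d := by
  obtain ⟨k, hk⟩ := pow_unbounded_of_one_lt C hr
  exact ⟨2 * (k + 1), even_two_mul _, by omega,
    hk.le.trans (pow_le_pow_right₀ hr.le (by omega))⟩

namespace Seminorm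

variable {E : Type*}

lemma exists_dual_abs_le_eq [AddCommGroup E] [Module ℝ E] (p : Seminorm ℝ E) (x : E) :
    ∃ φ : Module.Dual ℝ E, (∀ y, |φ y| ≤ p y) ∧ φ x = p x := by
  have H : ∀ c : ℝ, c • x = 0 → c • p x = 0 := by
    intro c hc
    rcases smul_eq_zero.1 hc with rfl | rfl <;> simp
  set f : E →ₗ.[ℝ] ℝ := LinearPMap.mkSpanSingleton' x (p x) H
  obtain ⟨φ, hφf, hφp⟩ := Module.Dual.exists_extension_of_le_seminorm_real f.domain f.toFun
    (p := p) <| by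
      rintro ⟨_, hy⟩
      obtain ⟨c, rfl⟩ := Submodule.mem_span_singleton.1 hy
      simp only [LinearPMap.toFun_eq_coe, f, LinearPMap.mkSpanSingleton'_apply, smul_eq_mul,
        map_smul_eq_mul, Real.norm_eq_abs]
      exact mul_le_mul_of_nonneg_right (le_abs_self c) (apply_nonneg p x)
  exact ⟨φ, hφp, (hφf ⟨x, Submodule.mem_span_singleton_self x⟩).trans
    (LinearPMap.mkSpanSingleton'_apply_self x (p x) H _)⟩

variable [NormedAddCommGroup E] [NormedSpace ℝ E] [FiniteDimensional ℝ E]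

lemma exists_finset_dual_approx (p : Seminorm ℝ E) (hp : ∀ x ≠ 0, 0 < p x) {δ : ℝ}
    (hδ : 0 < δ) : ∃ s : Finset (Module.Dual ℝ E),
      (∀ φ ∈ s, ∀ y, |φ y| ≤ (1 + δ) * p y) ∧ ∀ y ≠ 0, ∃ φ ∈ s, p y ≤ φ y := by
  classical
  choose φ hφp hφx using p.exists_dual_abs_le_eq
  have hcont : Continuous p := continuousOn_univ.1 (p.convexOn.continuousOn isOpen_univ)
  -- `U x` is an open cone containing `x` (as `φ x` supports `p` at `x`), and every ray meets
  -- the compact unit sphere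
  let U : E → Set E := fun x => {y | p y < (1 + δ) * φ x y}
  have hU : ∀ x, IsOpen (U x) := fun x =>
    isOpen_lt hcont (continuous_const.mul (φ x).continuous_of_finiteDimensional)
  have hcover : Metric.sphere (0 : E) 1 ⊆ ⋃ x, U x := fun y hy => Set.mem_iUnion.2
    ⟨y, by
      have := hp y (Metric.ne_of_mem_sphere hy one_ne_zero)
      simp only [U, Set.mem_ofPred_eq, hφx]
      nlinarith⟩
  obtain ⟨t, ht⟩ := (isCompact_sphere (0 : E) 1).elim_finite_subcover U hU hcover
  refine ⟨t.image fun x => (1 + δ) • φ x, ?_, fun y hy => ?_⟩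
  · simp only [Finset.mem_image, forall_exists_index, and_imp]
    rintro _ x - rfl y
    simp only [LinearMap.smul_apply, smul_eq_mul, abs_mul, abs_of_pos (by linarith : 0 < 1 + δ)]
    exact mul_le_mul_of_nonneg_left (hφp x y) (by linarith)
  · have hy' : ‖y‖⁻¹ • y ∈ Metric.sphere (0 : E) 1 := by
      simp [norm_smul, norm_ne_zero_iff.2 hy]
    obtain ⟨x, hxt, hx⟩ := Set.mem_iUnion₂.1 (ht hy')
    refine ⟨(1 + δ) • φ x, Finset.mem_image_of_mem _ hxt, ?_⟩
    have hpos : 0 < ‖y‖⁻¹ := inv_pos.2 (norm_pos_iff.2 hy)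
    simp only [U, Set.mem_ofPred_eq, map_smul_eq_mul, map_smul, smul_eq_mul, Real.norm_eq_abs,
      abs_of_pos hpos] at hx
    simp only [LinearMap.smul_apply, smul_eq_mul]
    nlinarith

theorem exists_sum_pow_dual_sandwich (p : Seminorm ℝ E) (hp : ∀ x ≠ 0, 0 < p x) {ε : ℝ}
    (hε : 0 < ε) : ∃ s : Finset (Module.Dual ℝ E), ∃ d : ℕ, Even d ∧ 0 < d ∧
      ∀ y, p y ^ d ≤ ∑ φ ∈ s, φ y ^ d ∧ ∑ φ ∈ s, φ y ^ d ≤ ((1 + ε) * p y) ^ d := by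
  obtain ⟨s, hs_le, hs_ge⟩ := p.exists_finset_dual_approx hp (half_pos hε)
  -- `d` is chosen so that the factor `#s` is absorbed: `#s * (1 + ε/2)^d ≤ (1 + ε)^d`
  obtain ⟨d, hd, hd0, hcard⟩ := exists_even_pos_le_pow (C := s.card)
    (r := (1 + ε) / (1 + ε / 2)) ((one_lt_div (by positivity)).2 (by linarith))
  refine ⟨s, d, hd, hd0, fun y => ⟨?_, ?_⟩⟩
  · rcases eq_or_ne y 0 with rfl | hy
    · simp [hd0.ne']
    obtain ⟨φ, hφs, hφ⟩ := hs_ge y hy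
    calc p y ^ d ≤ φ y ^ d := pow_le_pow_left₀ (apply_nonneg p y) hφ d
      _ ≤ ∑ ψ ∈ s, ψ y ^ d :=
        Finset.single_le_sum (f := fun ψ => ψ y ^ d) (fun _ _ => hd.pow_nonneg _) hφs
  · calc ∑ φ ∈ s, φ y ^ d ≤ s.card • ((1 + ε / 2) * p y) ^ d :=
          Finset.sum_le_card_nsmul _ _ _ fun φ hφ => by
            rw [← hd.pow_abs]
            exact pow_le_pow_left₀ (abs_nonneg _) (hs_le φ hφ y) d
      _ ≤ ((1 + ε) / (1 + ε / 2)) ^ d * ((1 + ε / 2) * p y) ^ d := by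
          rw [nsmul_eq_mul]
          gcongr
      _ = ((1 + ε) * p y) ^ d := by
          rw [← mul_pow]
          congr 1
          field_simp

end Seminorm

namespace Module.Dual

variable {R σ : Type*} [CommRing R] [Fintype σ] [DecidableEq σ]

noncomputable def toMvPolynomial (φ : Module.Dual R (σ → R)) : MvPolynomial σ R :=
  (LinearMap.toMatrix' (LinearMap.pi fun _ : Unit => φ)).toMvPolynomial ()

lemma eval_toMvPolynomial (φ : Module.Dual R (σ → R)) (x : σ → R) :
    MvPolynomial.eval x φ.toMvPolynomial = φ x := by
  simp [toMvPolynomial, Matrix.toMvPolynomial_eval_eq_apply, LinearMap.toMatrix'_mulVec]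

lemma isHomogeneous_toMvPolynomial (φ : Module.Dual R (σ → R)) :
    φ.toMvPolynomial.IsHomogeneous 1 :=
  Matrix.toMvPolynomial_isHomogeneous _ _

end Module.Dual

/-- Any norm `N` on `ℝⁿ` can be sandwiched, up to a factor `1 + ε`, by a polynomial norm:
there exist an even integer `d` and a convex positive definite form `f` of degree `d`
with `N x ≤ f(x)^{1/d} ≤ (1+ε) N x` for all `x`. -/
theorem stmt_6 {n : ℕ} (N : (Fin n → ℝ) → ℝ)
    (hN0 : ∀ x : Fin n → ℝ, x ≠ 0 → 0 < N x)
    (hNh : ∀ (c : ℝ) (x : Fin n → ℝ), N (c • x) = |c| * N x)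
    (hNt : ∀ x y : Fin n → ℝ, N (x + y) ≤ N x + N y)
    (ε : ℝ) (hε : 0 < ε) :
    ∃ d : ℕ, Even d ∧ 0 < d ∧
      ∃ p : MvPolynomial (Fin n) ℝ, p.IsHomogeneous d ∧
        ConvexOn ℝ Set.univ (fun x : Fin n → ℝ => MvPolynomial.eval x p) ∧
        (∀ x : Fin n → ℝ, x ≠ 0 → 0 < MvPolynomial.eval x p) ∧
        ∃ g : (Fin n → ℝ) → ℝ,
          (∀ x, g x ^ d = MvPolynomial.eval x p) ∧
          ∀ x : Fin n → ℝ, N x ≤ g x ∧ g x ≤ (1 + ε) * N x := by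
  let q : Seminorm ℝ (Fin n → ℝ) := .of N hNt fun c x => by rw [hNh, Real.norm_eq_abs]
  obtain ⟨s, d, hd, hd0, hsand⟩ := q.exists_sum_pow_dual_sandwich hN0 hε
  let P := ∑ φ ∈ s, φ.toMvPolynomial ^ d
  have hP : ∀ x, eval x P = ∑ φ ∈ s, φ x ^ d := by
    simp [P, Module.Dual.eval_toMvPolynomial]
  have hP0 : ∀ x, 0 ≤ eval x P := fun x => by
    rw [hP]
    exact (pow_nonneg (apply_nonneg q x) d).trans (hsand x).1
  have hroot : ∀ x, (eval x P ^ (d⁻¹ : ℝ)) ^ d = eval x P := fun x =>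
    Real.rpow_inv_natCast_pow (hP0 x) hd0.ne'
  refine ⟨d, hd, hd0, P, ?_, ?_, fun x hx => ?_, fun x => eval x P ^ (d⁻¹ : ℝ), hroot,
    fun x => ⟨?_, ?_⟩⟩
  · exact IsHomogeneous.sum _ _ _ fun φ _ => by
      simpa using φ.isHomogeneous_toMvPolynomial.pow d
  · simp only [hP]
    exact ConvexOn.finset_sum s (fun φ _ => (hd.convexOn_pow.comp_linearMap φ :)) convex_univ
  · rw [hP]
    exact (pow_pos (hN0 x hx) d).trans_le (hsand x).1
  · change q x ≤ eval x P ^ (d⁻¹ : ℝ)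
    rw [← pow_le_pow_iff_left₀ (apply_nonneg q x) (Real.rpow_nonneg (hP0 x) _) hd0.ne', hroot, hP]
    exact (hsand x).1
  · change eval x P ^ (d⁻¹ : ℝ) ≤ (1 + ε) * q x
    have hq : 0 ≤ (1 + ε) * q x := mul_nonneg (by linarith) (apply_nonneg q x)
    rw [← pow_le_pow_iff_left₀ (Real.rpow_nonneg (hP0 x) _) hq hd0.ne', hroot, hP]
    exact (hsand x).2
end

section
/- Let g and g' be two convex functions such that f = g - h = g' - h' with h = g - f and h' = g' - f convex, and suppose g - g' is convex. For a point x₀, define f_g(x) = g(x) - h(x₀) - ∇h(x₀)ᵀ(x - x₀) and f_{g'}(x) = g'(x) - h'(x₀) - ∇h'(x₀)ᵀ(x - x₀). Then f_{g'}(x) ≤ f_g(x) for all x. -/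
/- Along the segment from `x₀` to `x`, `f` is a convex function of one variable, whose slope
between `0` and `1` dominates its derivative at `0`. -/
theorem ConvexOn.add_fderiv_sub_le {E : Type*} [NormedAddCommGroup E] [NormedSpace ℝ E]
    {s : Set E} {f : E → ℝ} {f' : E →L[ℝ] ℝ} {x₀ x : E} (hf : ConvexOn ℝ s f)
    (hx₀ : x₀ ∈ s) (hx : x ∈ s) (hf' : HasFDerivAt f f' x₀) :
    f x₀ + f' (x - x₀) ≤ f x := by
  let ℓ : ℝ →ᵃ[ℝ] E := AffineMap.lineMap x₀ x
  have hℓ : HasDerivAt ℓ (x - x₀) 0 := AffineMap.hasDerivAt_lineMap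
  have hslope := (hf.comp_affineMap ℓ).le_slope_of_hasDerivAt
    (x := 0) (y := 1) (by simpa [ℓ] using hx₀) (by simpa [ℓ] using hx) zero_lt_one
    ((by simpa [ℓ] using hf' : HasFDerivAt f f' (ℓ 0)).comp_hasDerivAt 0 hℓ)
  simp only [Function.comp_apply, slope_def_field, ℓ, AffineMap.lineMap_apply_zero,
    AffineMap.lineMap_apply_one, sub_zero, div_one] at hslope
  linarith

theorem stmt_8_general {n : ℕ} (f g g' h h' : (Fin n → ℝ) → ℝ)
    (hhd : Differentiable ℝ h) (hh'd : Differentiable ℝ h')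
    (hh : ∀ x, h x = g x - f x) (hh' : ∀ x, h' x = g' x - f x)
    (hdom : ConvexOn ℝ Set.univ fun x => g x - g' x)
    (x₀ : Fin n → ℝ) :
    ∀ x : Fin n → ℝ,
      g' x - (h' x₀ + fderiv ℝ h' x₀ (x - x₀)) ≤
        g x - (h x₀ + fderiv ℝ h x₀ (x - x₀)) := by
  intro x
  have hsub : (fun y => g y - g' y) = fun y => h y - h' y := by
    funext y
    rw [hh, hh']
    ring
  have hderiv : HasFDerivAt (fun y => g y - g' y) (fderiv ℝ h x₀ - fderiv ℝ h' x₀) x₀ :=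
    hsub ▸ (hhd x₀).hasFDerivAt.sub (hh'd x₀).hasFDerivAt
  have htangent := hdom.add_fderiv_sub_le (Set.mem_univ x₀) (Set.mem_univ x) hderiv
  simp only [sub_apply] at htangent
  linarith [hh x₀, hh' x₀]

/-- If `g` and `g'` are two dc decompositions of `f` (i.e. `g, g', h := g - f, h' := g' - f`
are convex) and `g'` dominates `g` (i.e. `g - g'` is convex), then the convexified function
obtained from `g'` lower bounds the one obtained from `g` everywhere. -/
theorem stmt_8 {n : ℕ} (f g g' h h' : (Fin n → ℝ) → ℝ)
    (hgc : ConvexOn ℝ Set.univ g) (hg'c : ConvexOn ℝ Set.univ g')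
    (hhc : ConvexOn ℝ Set.univ h) (hh'c : ConvexOn ℝ Set.univ h')
    (hgd : Differentiable ℝ g) (hg'd : Differentiable ℝ g')
    (hhd : Differentiable ℝ h) (hh'd : Differentiable ℝ h')
    (hfd : Differentiable ℝ f)
    (hh : ∀ x, h x = g x - f x) (hh' : ∀ x, h' x = g' x - f x)
    (hdom : ConvexOn ℝ Set.univ fun x => g x - g' x)
    (x₀ : Fin n → ℝ) :
    ∀ x : Fin n → ℝ,
      g' x - (h' x₀ + fderiv ℝ h' x₀ (x - x₀)) ≤
        g x - (h x₀ + fderiv ℝ h x₀ (x - x₀)) :=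
  stmt_8_general f g g' h h' hhd hh'd hh hh' hdom x₀
end

section
/- An n×n symmetric matrix M is diagonally dominant with nonnegative diagonal if and only if it can be written as M = Σᵢ αᵢ vᵢvᵢᵀ with αᵢ ≥ 0, where {vᵢ} ranges over all nonzero vectors in ℝⁿ with at most 2 nonzero components, each equal to ±1. -/
/-!
Both sides describe pointed cones of matrices. A generator `v vᵀ` is diagonally dominant: in a
row `i` with `vᵢ = ±1` at most one other entry is nonzero, and it is `±1`; and diagonal dominance
is preserved by nonnegative combinations. Conversely, a symmetric diagonally dominant `M` is
`Σᵢ (Mᵢᵢ - Σ_{j≠i} |Mᵢⱼ|) eᵢeᵢᵀ + ½ Σ_{i≠j} |Mᵢⱼ| wᵢⱼwᵢⱼᵀ` with `wᵢⱼ = eᵢ + sign(Mᵢⱼ) eⱼ`,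
because `|c| (eᵢ + sign(c) eⱼ)(eᵢ + sign(c) eⱼ)ᵀ = |c| (Eᵢᵢ + Eⱼⱼ) + c (Eᵢⱼ + Eⱼᵢ)`.
-/

open Matrix

theorem PointedCone.mem_hull_image_iff {R E V : Type*} [Semiring R] [PartialOrder R]
    [IsOrderedRing R] [AddCommMonoid E] [Module R E] {f : V → E} {S : Set V} {x : E} :
    x ∈ PointedCone.hull R (f '' S) ↔ ∃ (N : ℕ) (c : Fin N → R) (v : Fin N → V),
      (∀ k, 0 ≤ c k) ∧ (∀ k, v k ∈ S) ∧ x = ∑ k, c k • f (v k) := by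
  rw [Submodule.mem_span_set']
  constructor
  · rintro ⟨N, c, g, rfl⟩
    choose v hvS hv using fun k => (g k).2
    exact ⟨N, fun k => c k, v, fun k => (c k).2, hvS, by simp only [hv]; rfl⟩
  · rintro ⟨N, c, v, hc, hv, rfl⟩
    exact ⟨N, fun k => ⟨c k, hc k⟩, fun k => ⟨f (v k), v k, hv k, rfl⟩, rfl⟩

section

variable {ι : Type*} [DecidableEq ι]

theorem vecMulVec_single_single {α : Type*} [MulZeroClass α] (i j : ι) (a b : α) :
    vecMulVec (Pi.single i a) (Pi.single j b) = single i j (a * b) := by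
  ext k l
  simp only [vecMulVec_apply, single_apply, Pi.single_apply]
  split_ifs <;> simp_all

theorem abs_smul_vecMulVec_single_add_sign (i j : ι) (c : ℝ) :
    |c| • vecMulVec (Pi.single i 1 + Pi.single j (SignType.sign c : ℝ))
        (Pi.single i 1 + Pi.single j (SignType.sign c : ℝ)) =
      single i i |c| + single j j |c| + single i j c + single j i c := by
  simp only [add_vecMulVec, vecMulVec_add, vecMulVec_single_single, smul_add, smul_single,
    smul_eq_mul, one_mul, mul_one, ← mul_assoc, abs_mul_sign, self_mul_sign]
  abel

variable [Fintype ι]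

namespace Matrix

def IsDiagDominant (M : Matrix ι ι ℝ) : Prop :=
  ∀ i, ∑ j ∈ Finset.univ.erase i, |M i j| ≤ M i i

namespace IsDiagDominant

variable {A B M : Matrix ι ι ℝ}

theorem diag_nonneg (h : M.IsDiagDominant) (i : ι) : 0 ≤ M i i :=
  (Finset.sum_nonneg fun _ _ => abs_nonneg _).trans (h i)

theorem add (hA : A.IsDiagDominant) (hB : B.IsDiagDominant) : (A + B).IsDiagDominant := fun i =>
  calc ∑ j ∈ Finset.univ.erase i, |(A + B) i j|
      ≤ ∑ j ∈ Finset.univ.erase i, (|A i j| + |B i j|) :=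
        Finset.sum_le_sum fun j _ => abs_add_le _ _
    _ ≤ (A + B) i i := by rw [Finset.sum_add_distrib, add_apply]; exact add_le_add (hA i) (hB i)

theorem smul (h : M.IsDiagDominant) {c : ℝ} (hc : 0 ≤ c) : (c • M).IsDiagDominant := fun i => by
  simpa only [smul_apply, smul_eq_mul, abs_mul, abs_of_nonneg hc, ← Finset.mul_sum]
    using mul_le_mul_of_nonneg_left (h i) hc

end IsDiagDominant

variable (ι) in
def diagDominantCone : PointedCone ℝ (Matrix ι ι ℝ) where
  carrier := {M | M.IsDiagDominant}
  add_mem' := IsDiagDominant.add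
  zero_mem' := fun i => by simp
  smul_mem' := fun c _ hM => hM.smul c.2

end Matrix

def IsSignedPairVec (v : ι → ℝ) : Prop :=
  v ≠ 0 ∧ (Finset.univ.filter fun i => v i ≠ 0).card ≤ 2 ∧ ∀ i, v i = 0 ∨ v i = 1 ∨ v i = -1

theorem isDiagDominant_vecMulVec_self {v : ι → ℝ}
    (hcard : (Finset.univ.filter fun i => v i ≠ 0).card ≤ 2)
    (hval : ∀ i, v i = 0 ∨ v i = 1 ∨ v i = -1) : (vecMulVec v v).IsDiagDominant := by
  have habs : ∀ i, |v i| ≤ 1 := fun i => by rcases hval i with h | h | h <;> simp [h]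
  have htotal : ∑ i, |v i| ≤ 2 :=
    calc ∑ i, |v i| = ∑ i ∈ Finset.univ.filter fun i => v i ≠ 0, |v i| :=
          (Finset.sum_filter_of_ne fun i _ hi => abs_ne_zero.mp hi).symm
      _ ≤ (Finset.univ.filter fun i => v i ≠ 0).card • (1 : ℝ) :=
          Finset.sum_le_card_nsmul _ _ _ fun i _ => habs i
      _ ≤ 2 := by rw [nsmul_one]; exact_mod_cast hcard
  intro i
  simp only [vecMulVec_apply, abs_mul, ← Finset.mul_sum]
  rw [Finset.sum_erase_eq_sub (Finset.mem_univ i)]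
  rcases hval i with h | h | h <;> simp only [h, abs_zero, abs_one, abs_neg, zero_mul] <;> linarith

theorem isSignedPairVec_single (i : ι) : IsSignedPairVec (Pi.single i (1 : ℝ)) := by
  refine ⟨by simp, (Finset.card_le_card (t := {i}) fun k => ?_).trans (by simp), fun k => ?_⟩
  · by_cases hk : k = i <;> simp [hk]
  · by_cases hk : k = i <;> simp [hk]

theorem isSignedPairVec_single_add_single {i j : ι} (hij : i ≠ j) (s : SignType) :
    IsSignedPairVec (Pi.single i (1 : ℝ) + Pi.single j (s : ℝ)) := by
  refine ⟨fun h => by simpa [hij.symm] using congrFun h i,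
    (Finset.card_le_card (t := {i, j}) fun k => ?_).trans Finset.card_le_two, fun k => ?_⟩
  · by_cases hki : k = i <;> by_cases hkj : k = j <;> simp [hki, hkj]
  · by_cases hki : k = i
    · simp [hki, hij]
    · by_cases hkj : k = j
      · cases s <;> simp [hkj, hij.symm]
      · simp [hki, hkj]

namespace Matrix

variable (ι) in
def signedPairCone : PointedCone ℝ (Matrix ι ι ℝ) :=
  PointedCone.hull ℝ ((fun v => vecMulVec v v) '' {v : ι → ℝ | IsSignedPairVec v})

theorem signedPairCone_le_diagDominantCone : signedPairCone ι ≤ diagDominantCone ι :=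
  Submodule.span_le.mpr <| Set.image_subset_iff.mpr fun _ hv =>
    isDiagDominant_vecMulVec_self hv.2.1 hv.2.2

theorem IsSymm.eq_sum_single_diag_add_sum_single_pair {M : Matrix ι ι ℝ} (hM : M.IsSymm) :
    M = ∑ i, single i i (M i i - ∑ j ∈ Finset.univ.erase i, |M i j|) +
      ∑ i, ∑ j ∈ Finset.univ.erase i, (2⁻¹ : ℝ) •
        (single i i |M i j| + single j j |M i j| + single i j (M i j) + single j i (M i j)) := by
  ext a b
  simp only [Finset.mem_univ, Finset.sum_erase_eq_sub, smul_add, smul_single, smul_eq_mul,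
    Finset.sum_add_distrib, Finset.sum_sub_distrib, add_apply, sub_apply, sum_apply, single_apply,
    ite_and, Finset.sum_ite_eq', Finset.sum_ite_irrel, ← Finset.mul_sum, Finset.sum_const_zero]
  rcases eq_or_ne a b with rfl | hab
  · simp only [if_true, hM.apply a]
    ring
  · simp only [hab, if_false, if_true, ite_self, hM.apply a b]
    ring

theorem IsDiagDominant.mem_signedPairCone {M : Matrix ι ι ℝ} (hM : M.IsSymm)
    (hdd : M.IsDiagDominant) :
    M ∈ signedPairCone ι := by
  have hgen : ∀ v : ι → ℝ, IsSignedPairVec v → vecMulVec v v ∈ signedPairCone ι :=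
    fun v hv => PointedCone.subset_hull ⟨v, hv, rfl⟩
  rw [hM.eq_sum_single_diag_add_sum_single_pair]
  refine add_mem (Submodule.sum_mem _ fun i _ => ?_)
    (Submodule.sum_mem _ fun i _ => Submodule.sum_mem _ fun j hj => ?_)
  · rw [← mul_one (_ - _), ← smul_eq_mul, ← smul_single, single_eq_single_vecMulVec_single]
    exact PointedCone.smul_mem _ (sub_nonneg.mpr (hdd i)) (hgen _ (isSignedPairVec_single i))
  · rw [← abs_smul_vecMulVec_single_add_sign]
    exact PointedCone.smul_mem _ (by norm_num) <| PointedCone.smul_mem _ (abs_nonneg _) <|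
      hgen _ (isSignedPairVec_single_add_single (Finset.ne_of_mem_erase hj).symm _)

theorem IsSymm.isDiagDominant_iff_mem_signedPairCone {M : Matrix ι ι ℝ} (hM : M.IsSymm) :
    M.IsDiagDominant ↔ M ∈ signedPairCone ι :=
  ⟨fun h => h.mem_signedPairCone hM, fun h => signedPairCone_le_diagDominantCone h⟩

end Matrix

end

/-- Barker–Carlson: a symmetric `n×n` matrix `M` is diagonally dominant with nonnegative
diagonal if and only if it is a nonnegative combination `Σ αₖ vₖvₖᵀ` of rank-one matrices
built from nonzero vectors with at most two nonzero components, each equal to `±1`. -/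
theorem stmt_15 {n : ℕ} (M : Matrix (Fin n) (Fin n) ℝ) (hM : M.IsSymm) :
    ((∀ i, 0 ≤ M i i) ∧ ∀ i, ∑ j ∈ Finset.univ.erase i, |M i j| ≤ M i i) ↔
    ∃ (N : ℕ) (α : Fin N → ℝ) (v : Fin N → Fin n → ℝ),
      (∀ k, 0 ≤ α k) ∧
      (∀ k, v k ≠ 0 ∧
        (Finset.univ.filter fun i => v k i ≠ 0).card ≤ 2 ∧
        ∀ i, v k i = 0 ∨ v k i = 1 ∨ v k i = -1) ∧
      M = ∑ k, α k • vecMulVec (v k) (v k) := by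
  calc _ ↔ M.IsDiagDominant := ⟨And.right, fun h => ⟨h.diag_nonneg, h⟩⟩
    _ ↔ M ∈ signedPairCone (Fin n) := hM.isDiagDominant_iff_mem_signedPairCone
    _ ↔ _ := PointedCone.mem_hull_image_iff
end

section
/- Let f : ℝⁿ → ℝ be C² with Hessian H_f(x) ⪰ 0 on a compact box B, and suppose a polynomial q satisfies max_B |∂²f/∂xᵢ∂xⱼ − ∂²q/∂xᵢ∂xⱼ| ≤ ε/(2(1+2nC)) for all i,j, where C = max_{x∈B}(½Σᵢxᵢ²). Then p(x) := q(x) + (nε/(2(1+2nC)))·xᵀx has positive definite Hessian on B: H_p(x) ⪰ (nε/(2(1+2nC)))·I for all x ∈ B. -/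
/-!
Write `δ = ε/(2(1+2nC))`. The entrywise bound `|∂ᵢ∂ⱼf - ∂ᵢ∂ⱼq| ≤ δ` and Cauchy–Schwarz
`(∑ᵢ |yᵢ|)² ≤ n ∑ᵢ yᵢ²` give `yᵀH_q y ≥ yᵀH_f y - nδ|y|² ≥ -nδ|y|²`, using `H_f ⪰ 0`.
The quadratic correction `nδ·xᵀx` adds `2nδ|y|²`, so `yᵀH_p y ≥ nδ|y|²`.
-/

open Finset

section QuadraticForm

variable {ι : Type*} [Fintype ι]

theorem abs_sum_sum_mul_mul_le (M : ι → ι → ℝ) {δ : ℝ} (hM : ∀ i j, |M i j| ≤ δ) (y : ι → ℝ) :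
    |∑ i, ∑ j, y i * y j * M i j| ≤ Fintype.card ι * δ * ∑ i, y i ^ 2 := by
  cases isEmpty_or_nonempty ι with
  | inl _ => simp
  | inr h =>
    obtain ⟨i₀⟩ := h
    have hδ : 0 ≤ δ := (abs_nonneg _).trans (hM i₀ i₀)
    have hCS : (∑ i, |y i|) ^ 2 ≤ Fintype.card ι * ∑ i, y i ^ 2 := by
      simpa using sq_sum_le_card_mul_sum_sq (s := univ) (f := fun i => |y i|)
    calc |∑ i, ∑ j, y i * y j * M i j|
        ≤ ∑ i, ∑ j, |y i| * |y j| * δ := by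
          refine (abs_sum_le_sum_abs _ _).trans (sum_le_sum fun i _ => ?_)
          refine (abs_sum_le_sum_abs _ _).trans (sum_le_sum fun j _ => ?_)
          rw [abs_mul, abs_mul]
          exact mul_le_mul_of_nonneg_left (hM i j) (by positivity)
      _ = (∑ i, |y i|) ^ 2 * δ := by rw [sq, sum_mul_sum, sum_mul]; simp_rw [sum_mul]
      _ ≤ Fintype.card ι * δ * ∑ i, y i ^ 2 := by nlinarith

variable [DecidableEq ι]

theorem ContinuousLinearMap.apply_apply_eq_sum (A : (ι → ℝ) →L[ℝ] (ι → ℝ) →L[ℝ] ℝ)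
    (y : ι → ℝ) :
    A y y = ∑ i, ∑ j, y i * y j * A (Pi.single i 1) (Pi.single j 1) := by
  conv_lhs => rw [pi_eq_sum_univ' y]
  simp only [map_sum, map_smul, _root_.sum_apply, smul_apply, smul_eq_mul, mul_sum]
  rw [sum_comm]
  exact sum_congr rfl fun i _ => sum_congr rfl fun j _ => by ring

theorem ContinuousLinearMap.apply_apply_sub_le_of_abs_sub_le
    (A Q : (ι → ℝ) →L[ℝ] (ι → ℝ) →L[ℝ] ℝ) {δ : ℝ}
    (h : ∀ i j, |A (Pi.single i 1) (Pi.single j 1) - Q (Pi.single i 1) (Pi.single j 1)| ≤ δ)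
    (y : ι → ℝ) :
    A y y - Fintype.card ι * δ * ∑ i, y i ^ 2 ≤ Q y y := by
  have hdiff := abs_sum_sum_mul_mul_le _ h y
  simp only [mul_sub, sum_sub_distrib, ← A.apply_apply_eq_sum, ← Q.apply_apply_eq_sum] at hdiff
  linarith [le_abs_self (A y y - Q y y)]

end QuadraticForm

section SecondDerivative

variable {E : Type*} [NormedAddCommGroup E] [NormedSpace ℝ E]

theorem fderiv_fderiv_apply_eq {g : E → ℝ} {x : E} (hg : DifferentiableAt ℝ (fderiv ℝ g) x)
    (v w : E) : fderiv ℝ (fun z => fderiv ℝ g z v) x w = fderiv ℝ (fderiv ℝ g) x w v := by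
  rw [fderiv_clm_apply hg (differentiableAt_const v)]
  simp

theorem fderiv_fderiv_add_const_mul {g h : E → ℝ} (hg : ContDiff ℝ 2 g) (hh : ContDiff ℝ 2 h)
    (c : ℝ) (x y : E) :
    fderiv ℝ (fun z => fderiv ℝ (fun w => g w + c * h w) z y) x y =
      fderiv ℝ (fun z => fderiv ℝ g z y) x y + c * fderiv ℝ (fun z => fderiv ℝ h z y) x y := by
  have hg₁ := hg.differentiable (by norm_num)
  have hh₁ := hh.differentiable (by norm_num)
  have hg₂ := (hg.fderiv_right (m := 1) (by norm_num)).differentiable one_ne_zero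
  have hh₂ := (hh.fderiv_right (m := 1) (by norm_num)).differentiable one_ne_zero
  have hfirst : (fun z => fderiv ℝ (fun w => g w + c * h w) z y) =
      fun z => fderiv ℝ g z y + c * fderiv ℝ h z y := by
    funext z
    rw [fderiv_fun_add (hg₁ z) ((hh₁ z).const_mul c), fderiv_const_mul (hh₁ z)]
    rfl
  rw [hfirst, fderiv_fun_add (by fun_prop) (by fun_prop), fderiv_const_mul (by fun_prop)]
  rfl

end SecondDerivative

section SumSq

variable {ι : Type*} [Fintype ι]

theorem fderiv_coord_apply (z y : ι → ℝ) (i : ι) :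
    fderiv ℝ (fun w : ι → ℝ => w i) z y = y i := by
  rw [fderiv_apply differentiableAt_id i]
  simp

theorem fderiv_sum_sq_apply (z y : ι → ℝ) :
    fderiv ℝ (fun w => ∑ i, w i ^ 2) z y = ∑ i, 2 * z i * y i := by
  rw [fderiv_fun_sum (fun i _ => by fun_prop), _root_.sum_apply]
  refine sum_congr rfl fun i _ => ?_
  rw [fderiv_fun_pow 2 (by fun_prop)]
  simp [fderiv_coord_apply]

theorem fderiv_fderiv_sum_sq (x y : ι → ℝ) :
    fderiv ℝ (fun z => fderiv ℝ (fun w => ∑ i, w i ^ 2) z y) x y = 2 * ∑ i, y i ^ 2 := by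
  simp_rw [fderiv_sum_sq_apply]
  rw [fderiv_fun_sum (fun i _ => by fun_prop), _root_.sum_apply, mul_sum]
  refine sum_congr rfl fun i _ => ?_
  rw [fderiv_mul_const (by fun_prop), fderiv_const_mul (by fun_prop)]
  simp only [smul_apply, smul_eq_mul, fderiv_coord_apply]
  ring

end SumSq

theorem stmt_19_general {n : ℕ} (f : (Fin n → ℝ) → ℝ) (hf : ContDiff ℝ 2 f)
    (B : Set (Fin n → ℝ))
    (ε C : ℝ)
    (hpsd : ∀ x ∈ B, ∀ y : Fin n → ℝ, 0 ≤ fderiv ℝ (fun z => fderiv ℝ f z y) x y)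
    (q : MvPolynomial (Fin n) ℝ)
    (hq : ∀ (i j : Fin n), ∀ x ∈ B,
      |fderiv ℝ (fun z => fderiv ℝ f z (Pi.single j 1)) x (Pi.single i 1) -
        fderiv ℝ (fun z => fderiv ℝ (fun w => MvPolynomial.eval w q) z (Pi.single j 1)) x
          (Pi.single i 1)| ≤ ε / (2 * (1 + 2 * (n : ℝ) * C)))
    (p : (Fin n → ℝ) → ℝ)
    (hp : p = fun x => MvPolynomial.eval x q +
      ((n : ℝ) * ε / (2 * (1 + 2 * (n : ℝ) * C))) * ∑ i, x i ^ 2) :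
    ∀ x ∈ B, ∀ y : Fin n → ℝ,
      ((n : ℝ) * ε / (2 * (1 + 2 * (n : ℝ) * C))) * (∑ i, y i ^ 2) ≤
        fderiv ℝ (fun z => fderiv ℝ p z y) x y := by
  intro x hx y
  rw [mul_div_assoc] at hp ⊢
  set δ := ε / (2 * (1 + 2 * (n : ℝ) * C))
  set Q := fun w => MvPolynomial.eval w q
  have hQ : ContDiff ℝ 2 Q := (AnalyticOnNhd.eval_mvPolynomial q).contDiff
  have hdiff_fderiv {g : (Fin n → ℝ) → ℝ} (hg : ContDiff ℝ 2 g) :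
      DifferentiableAt ℝ (fderiv ℝ g) x :=
    ((hg.fderiv_right (m := 1) (by norm_num)).differentiable one_ne_zero) x
  have hHp : fderiv ℝ (fun z => fderiv ℝ p z y) x y =
      fderiv ℝ (fun z => fderiv ℝ Q z y) x y + n * δ * (2 * ∑ i, y i ^ 2) := by
    rw [hp, fderiv_fderiv_add_const_mul hQ (by fun_prop), fderiv_fderiv_sum_sq]
  have hHq : fderiv ℝ (fun z => fderiv ℝ f z y) x y - n * δ * ∑ i, y i ^ 2 ≤
      fderiv ℝ (fun z => fderiv ℝ Q z y) x y := by
    have hqx := fun i j => hq i j x hx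
    simp only [fderiv_fderiv_apply_eq (hdiff_fderiv hf),
      fderiv_fderiv_apply_eq (hdiff_fderiv hQ)] at hqx ⊢
    simpa using ContinuousLinearMap.apply_apply_sub_le_of_abs_sub_le _ _ hqx y
  rw [hHp]
  linarith [hpsd x hx y]

/-- If `f` is `C²` with `H_f(x) ⪰ 0` on a box `B`, and a polynomial `q` approximates all
second partial derivatives of `f` on `B` entrywise within `ε/(2(1+2nC))` where
`C = max_B (½Σᵢxᵢ²)`, then `p(x) := q(x) + (nε/(2(1+2nC)))·xᵀx` satisfies
`H_p(x) ⪰ (nε/(2(1+2nC)))·I` on `B`. -/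
theorem stmt_19 {n : ℕ} (f : (Fin n → ℝ) → ℝ) (hf : ContDiff ℝ 2 f)
    (a b : Fin n → ℝ) (B : Set (Fin n → ℝ))
    (hB : B = Set.univ.pi fun i => Set.Icc (a i) (b i))
    (ε C : ℝ) (hε : 0 < ε)
    (hC : IsGreatest ((fun x : Fin n → ℝ => (1 / 2) * ∑ i, x i ^ 2) '' B) C)
    (hpsd : ∀ x ∈ B, ∀ y : Fin n → ℝ, 0 ≤ fderiv ℝ (fun z => fderiv ℝ f z y) x y)
    (q : MvPolynomial (Fin n) ℝ)
    (hq : ∀ (i j : Fin n), ∀ x ∈ B,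
      |fderiv ℝ (fun z => fderiv ℝ f z (Pi.single j 1)) x (Pi.single i 1) -
        fderiv ℝ (fun z => fderiv ℝ (fun w => MvPolynomial.eval w q) z (Pi.single j 1)) x
          (Pi.single i 1)| ≤ ε / (2 * (1 + 2 * (n : ℝ) * C)))
    (p : (Fin n → ℝ) → ℝ)
    (hp : p = fun x => MvPolynomial.eval x q +
      ((n : ℝ) * ε / (2 * (1 + 2 * (n : ℝ) * C))) * ∑ i, x i ^ 2) :
    ∀ x ∈ B, ∀ y : Fin n → ℝ,
      ((n : ℝ) * ε / (2 * (1 + 2 * (n : ℝ) * C))) * (∑ i, y i ^ 2) ≤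
        fderiv ℝ (fun z => fderiv ℝ p z y) x y :=
  stmt_19_general f hf B ε C hpsd q hq p hp
end
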